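/- Let ε > 0. There exists λ with 0 < λ < 1/2 such that for all x ∈ (0, 1/2], (x + λx)^(1+ε) + (1 - x + λx)^(1+ε) < 1. -/
import Mathlib


theorem cheeger_convexity_lemma (ε : ℝ) (hε : 0 < ε) :
    ∃ lam : ℝ, 0 < lam ∧ lam < 1/2 ∧ ∀ x : ℝ, 0 < x → x ≤ 1/2 →
      (x + lam * x) ^ (1 + ε) + (1 - x + lam * x) ^ (1 + ε) < 1 := by
  have hc : (1/2 : ℝ) ^ ε < 1 := Real.rpow_lt_one (by norm_num) (by norm_num) hε
  -- find lam with (1+lam)^(1+ε) * (1/2)^ε + lam < 1, 0 < lam < 1/2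
  have hcont : ContinuousAt (fun l : ℝ => (1 + l) ^ (1 + ε) * (1/2 : ℝ) ^ ε + l) 0 := by
    have h1 : ContinuousAt (fun l : ℝ => (1 + l) ^ (1 + ε)) 0 := by
      have : ContinuousAt (fun y : ℝ => y ^ (1 + ε)) (1 + 0) :=
        Real.continuousAt_rpow_const _ _ (Or.inl (by norm_num))
      exact this.comp (by fun_prop)
    exact (h1.mul continuousAt_const).add continuousAt_id
  have hval : (fun l : ℝ => (1 + l) ^ (1 + ε) * (1/2 : ℝ) ^ ε + l) 0 < 1 := by
    simpa [Real.one_rpow] using hc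
  have hev : ∀ᶠ l in nhds (0:ℝ), (1 + l) ^ (1 + ε) * (1/2 : ℝ) ^ ε + l < 1 :=
    hcont.eventually_lt continuousAt_const hval
  have hev2 : ∀ᶠ l in nhdsWithin (0:ℝ) (Set.Ioi 0),
      ((1 + l) ^ (1 + ε) * (1/2 : ℝ) ^ ε + l < 1) ∧ 0 < l ∧ l < 1/2 := by
    filter_upwards [hev.filter_mono nhdsWithin_le_nhds,
      self_mem_nhdsWithin,
      (eventually_lt_nhds (show (0:ℝ) < 1/2 by norm_num)).filter_mono nhdsWithin_le_nhds]
      with l h1 h2 h3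
    exact ⟨h1, h2, h3⟩
  obtain ⟨lam, hkey, hl0, hl2⟩ := hev2.exists
  refine ⟨lam, hl0, hl2, fun x hx hx2 => ?_⟩
  have hlx : 0 < lam * x := mul_pos hl0 hx
  have hp1 : (1:ℝ) ≤ 1 + ε := by linarith
  -- first term
  have hA : x + lam * x = (1 + lam) * x := by ring
  have hxe : x ^ ε ≤ (1/2 : ℝ) ^ ε := Real.rpow_le_rpow hx.le hx2 hε.le
  have hterm1 : (x + lam * x) ^ (1 + ε) < (1 - lam) * x := by
    rw [hA, Real.mul_rpow (by linarith) hx.le]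
    have hxp : x ^ (1 + ε) = x * x ^ ε := by
      rw [Real.rpow_add hx, Real.rpow_one]
    have h1l : (0:ℝ) < (1 + lam) ^ (1 + ε) := Real.rpow_pos_of_pos (by linarith) _
    have : (1 + lam) ^ (1 + ε) * x ^ (1 + ε) ≤ ((1 + lam) ^ (1 + ε) * (1/2:ℝ)^ε) * x := by
      rw [hxp]
      nlinarith [mul_le_mul_of_nonneg_left hxe h1l.le]
    have hlt : ((1 + lam) ^ (1 + ε) * (1/2:ℝ)^ε) * x < (1 - lam) * x := by
      apply mul_lt_mul_of_pos_right _ hx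
      linarith
    linarith
  -- second term
  have hb0 : 0 < 1 - x + lam * x := by linarith
  have hb1 : 1 - x + lam * x ≤ 1 := by nlinarith
  have hterm2 : (1 - x + lam * x) ^ (1 + ε) ≤ 1 - x + lam * x := by
    have := Real.rpow_le_rpow_of_exponent_ge hb0 hb1 hp1
    simpa [Real.rpow_one] using this
  have : (1 - lam) * x + (1 - x + lam * x) = 1 := by ring
  linarith
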